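/- Let G be a locally finite graph on a vertex set X, let U ⊆ X, and let d ∈ ℕ. If the restriction of G^{≤2d+1} to U is component finite, then the restriction of G to B(U, d) is component finite; in particular, no infinite injective path of G is entirely contained in B(U, d). -/

import Mathlib

open MeasureTheory Set

/-- The restriction of a graph to a set of vertices, viewed as a graph on the same
vertex set (vertices outside the set become isolated). -/
def SimpleGraph.restrictSet {X : Type*} (G : SimpleGraph X) (C : Set X) : SimpleGraph X where
  Adj x y := G.Adj x y ∧ x ∈ C ∧ y ∈ C
  symm := ⟨fun x y ⟨h, hx, hy⟩ => ⟨h.symm, hy, hx⟩⟩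
  loopless := ⟨fun x h => G.loopless.irrefl x h.1⟩

/-- A graph is component finite if all its connected components are finite. -/
def SimpleGraph.ComponentFinite {X : Type*} (G : SimpleGraph X) : Prop :=
  ∀ x : X, {y | G.Reachable x y}.Finite

/-- `G^{≤r}`: distinct points are adjacent iff their `G`-path-distance is at most `r`. -/
def SimpleGraph.distLE {X : Type*} (G : SimpleGraph X) (r : ℕ) : SimpleGraph X where
  Adj x y := x ≠ y ∧ G.Reachable x y ∧ G.dist x y ≤ r
  symm := by
    constructor
    intro x y ⟨h1, h2, h3⟩
    exact ⟨h1.symm, h2.symm, by rwa [SimpleGraph.dist_comm]⟩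
  loopless := ⟨fun x h => h.1 rfl⟩

/-- `B(U, r)`: the set of vertices at `G`-path-distance at most `r` from `U`. -/
def SimpleGraph.ballSet {X : Type*} (G : SimpleGraph X) (U : Set X) (r : ℕ) : Set X :=
  {x | ∃ u ∈ U, G.Reachable x u ∧ G.dist x u ≤ r}

/-- `E(U, r)`: the set of vertices at `G`-path-distance exactly `r` from `U`. -/
def SimpleGraph.sphere {X : Type*} (G : SimpleGraph X) (U : Set X) (r : ℕ) : Set X :=
  {x | x ∈ G.ballSet U r ∧ ∀ r' < r, x ∉ G.ballSet U r'}

/-- A graph on a measurable space is Borel if its edge set is Borel. -/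
def SimpleGraph.BorelGraph {X : Type*} [MeasurableSpace X] (G : SimpleGraph X) : Prop :=
  MeasurableSet {p : X × X | G.Adj p.1 p.2}

/-- A graph is bipartite if the vertex set splits into two parts such that every
edge joins the two parts. -/
def SimpleGraph.Bipartite {X : Type*} (G : SimpleGraph X) : Prop :=
  ∃ A : Set X, ∀ x y, G.Adj x y → (x ∈ A ↔ y ∉ A)

/-- A set is `G`-invariant if it is a union of connected components of `G`. -/
def SimpleGraph.InvariantSet {X : Type*} (G : SimpleGraph X) (C : Set X) : Prop :=
  ∀ x ∈ C, ∀ y, G.Reachable x y → y ∈ C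

/-- `c` is a proper edge coloring of `G`: it is symmetric and any two distinct
edges sharing a vertex receive distinct colors. -/
def SimpleGraph.IsProperEdgeColoring {X κ : Type*} (G : SimpleGraph X) (c : X × X → κ) : Prop :=
  (∀ x y, c (x, y) = c (y, x)) ∧
  ∀ x y z, G.Adj x y → G.Adj x z → y ≠ z → c (x, y) ≠ c (x, z)

/-- A Borel matching in `G`: a Borel, symmetric set of edges of `G` that are
pairwise vertex-disjoint. -/
def SimpleGraph.IsBorelMatching {X : Type*} [MeasurableSpace X] (G : SimpleGraph X)
    (M : Set (X × X)) : Prop :=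
  MeasurableSet M ∧ (∀ p ∈ M, G.Adj p.1 p.2) ∧ (∀ x y, (x, y) ∈ M → (y, x) ∈ M) ∧
    ∀ x y z, (x, y) ∈ M → (x, z) ∈ M → y = z

/-- `asi(G) ≤ s`: for every `r` there are Borel sets `U_0, …, U_s` covering the
vertex set such that `G^{≤r}` restricted to each `U_i` is component finite. -/
def SimpleGraph.AsiLE {X : Type*} [MeasurableSpace X] (G : SimpleGraph X) (s : ℕ) : Prop :=
  ∀ r : ℕ, ∃ U : Fin (s + 1) → Set X, (∀ i, MeasurableSet (U i)) ∧ (⋃ i, U i) = Set.univ ∧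
    ∀ i, ((G.distLE r).restrictSet (U i)).ComponentFinite

/-- `G` is `μ`-hyperfinite: some `G`-invariant `μ`-conull Borel set `Y` is such that
`G` restricted to `Y` is an increasing union of component finite Borel graphs. -/
def SimpleGraph.MuHyperfinite {X : Type*} [MeasurableSpace X] (G : SimpleGraph X)
    (μ : Measure X) : Prop :=
  ∃ Y : Set X, MeasurableSet Y ∧ μ Yᶜ = 0 ∧ G.InvariantSet Y ∧
    ∃ H : ℕ → SimpleGraph X, Monotone H ∧ (∀ n, (H n).BorelGraph) ∧
      (∀ n, (H n).ComponentFinite) ∧ ∀ x y, (G.restrictSet Y).Adj x y ↔ ∃ n, (H n).Adj x y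

/-- A connected component (of the induced graph on the component of `x`) has exactly two ends. -/
def SimpleGraph.ComponentTwoEnded {X : Type*} (G : SimpleGraph X) (x : X) : Prop :=
  Nat.card (SimpleGraph.end (G.induce {y | G.Reachable x y})) = 2

private lemma finite_walk_ball {X : Type*} (G : SimpleGraph X)
    (hfin : ∀ v, (G.neighborSet v).Finite) (w : X) :
    ∀ d : ℕ, {y | ∃ p : G.Walk y w, p.length ≤ d}.Finite := by
  intro d
  induction d with
  | zero =>
    apply Set.Finite.subset (Set.finite_singleton w)
    rintro y ⟨p, hp⟩
    cases p with
    | nil => rfl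
    | cons h q => simp at hp
  | succ d ih =>
    apply Set.Finite.subset ((ih.biUnion (fun z _ => hfin z)).insert w)
    rintro y ⟨p, hp⟩
    cases p with
    | nil => exact Set.mem_insert _ _
    | cons h q =>
      right
      refine Set.mem_biUnion ⟨q, by simpa using hp⟩ ?_
      exact h.symm

private lemma finite_dist_ball {X : Type*} (G : SimpleGraph X)
    (hfin : ∀ v, (G.neighborSet v).Finite) (w : X) (d : ℕ) :
    {y | G.Reachable w y ∧ G.dist w y ≤ d}.Finite := by
  apply (finite_walk_ball G hfin w d).subset
  rintro y ⟨hr, hd⟩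
  obtain ⟨p, hp⟩ := hr.exists_walk_length_eq_dist
  exact ⟨p.reverse, by rwa [SimpleGraph.Walk.length_reverse, hp]⟩

private lemma key_walk {X : Type*} (G : SimpleGraph X) (U : Set X) (d : ℕ) :
    ∀ {x y : X}, (G.restrictSet (G.ballSet U d)).Walk x y → ∀ u ∈ U,
      G.Reachable x u → G.dist x u ≤ d →
      ∃ v ∈ U, ((G.distLE (2 * d + 1)).restrictSet U).Reachable u v ∧
        G.Reachable y v ∧ G.dist y v ≤ d := by
  intro x y w
  induction w with
  | nil => exact fun u hu hr hd => ⟨u, hu, SimpleGraph.Reachable.refl u, hr, hd⟩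
  | @cons a b c h p ih =>
    intro u hu hr hd
    obtain ⟨hab, _, hbB⟩ := h
    obtain ⟨u', hu', hru', hdu'⟩ := hbB
    -- show H.Reachable u u'
    obtain ⟨p1, hp1⟩ := hr.exists_walk_length_eq_dist
    obtain ⟨p2, hp2⟩ := hru'.exists_walk_length_eq_dist
    have hreach : G.Reachable u u' := (hr.symm.trans ⟨SimpleGraph.Walk.cons hab SimpleGraph.Walk.nil⟩).trans hru'
    have hdist : G.dist u u' ≤ 2 * d + 1 := by
      have := SimpleGraph.dist_le ((p1.reverse.append (SimpleGraph.Walk.cons hab SimpleGraph.Walk.nil)).append p2)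
      simp only [SimpleGraph.Walk.length_append, SimpleGraph.Walk.length_reverse,
        SimpleGraph.Walk.length_cons, SimpleGraph.Walk.length_nil, hp1, hp2] at this
      omega
    have hHr : ((G.distLE (2 * d + 1)).restrictSet U).Reachable u u' := by
      rcases eq_or_ne u u' with rfl | hne
      · exact SimpleGraph.Reachable.refl u
      · exact SimpleGraph.Adj.reachable ⟨⟨hne, hreach, hdist⟩, hu, hu'⟩
    obtain ⟨v, hv, hHv, hyv, hdyv⟩ := ih u' hu' hru' hdu'
    exact ⟨v, hv, hHr.trans hHv, hyv, hdyv⟩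

/-- If `G^{≤2d+1}` restricted to `U` is component finite, then `G` restricted to
`B(U, d)` is component finite; in particular no infinite injective path of `G` is
entirely contained in `B(U, d)`. -/
theorem componentFinite_ball {X : Type*} (G : SimpleGraph X)
    (hfin : ∀ v, (G.neighborSet v).Finite) (U : Set X) (d : ℕ)
    (h : ((G.distLE (2 * d + 1)).restrictSet U).ComponentFinite) :
    (G.restrictSet (G.ballSet U d)).ComponentFinite ∧
      ∀ p : ℕ → X, Function.Injective p → (∀ n, G.Adj (p n) (p (n + 1))) →
        ¬ (∀ n, p n ∈ G.ballSet U d) := by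
  have main : (G.restrictSet (G.ballSet U d)).ComponentFinite := by
    intro x
    by_cases hx : x ∈ G.ballSet U d
    · obtain ⟨u, hu, hru, hdu⟩ := hx
      refine Set.Finite.subset ((h u).biUnion
        (fun v _ => finite_dist_ball G hfin v d)) ?_
      intro y hy
      obtain ⟨w⟩ := hy
      obtain ⟨v, hv, hHv, hyv, hdyv⟩ := key_walk G U d w u hu hru hdu
      refine Set.mem_biUnion hHv ⟨hyv.symm, ?_⟩
      rwa [SimpleGraph.dist_comm]
    · apply Set.Finite.subset (Set.finite_singleton x)
      intro y hy
      obtain ⟨w⟩ := hy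
      cases w with
      | nil => rfl
      | cons hadj q => exact absurd hadj.2.1 hx
  refine ⟨main, fun p hinj hadj hball => ?_⟩
  have hreach : ∀ n, (G.restrictSet (G.ballSet U d)).Reachable (p 0) (p n) := by
    intro n
    induction n with
    | zero => exact SimpleGraph.Reachable.refl _
    | succ n ih =>
      exact ih.trans (SimpleGraph.Adj.reachable ⟨hadj n, hball n, hball (n + 1)⟩)
  have hsub : Set.range p ⊆ {y | (G.restrictSet (G.ballSet U d)).Reachable (p 0) y} := by
    rintro y ⟨n, rfl⟩
    exact hreach n
  exact ((main (p 0)).subset hsub).not_infinite (Set.infinite_range_of_injective hinj)
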